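/- (Gebauer–Möller / second Buchberger criterion, chain criterion) Let f, g, h be nonzero polynomials such that lm(h) divides lcm(lm f, lm g). If Spoly(f, h) and Spoly(g, h) both have standard representations with respect to a set G containing f, g, h, then Spoly(f, g) also has a standard representation with respect to G. -/

import Mathlib

/-!
Since `lm q` divides `L = lcm(lm f, lm g)`, both `lcm(lm f, lm q)` and `lcm(lm g, lm q)` divide `L`,
and the `q`-terms cancel in
`Spoly(f, g) = x^(L - lcm(lm f, lm q)) Spoly(f, q) - x^(L - lcm(lm g, lm q)) Spoly(g, q)`.
Multiplying a representation with all leading monomials below `t` by `x^a` gives one below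
`a + t`, and differences of representations below `L` are again below `L`.
-/

open MvPolynomial

/-- A global monomial ordering on the monomials of `k[x_1,…,x_n]`,
identified with exponent vectors `Fin n →₀ ℕ`. -/
structure MonOrd (n : ℕ) where
  lt : (Fin n →₀ ℕ) → (Fin n →₀ ℕ) → Prop
  strict : IsStrictTotalOrder (Fin n →₀ ℕ) lt
  compat : ∀ a b c, lt a b → lt (a + c) (b + c)
  global : ∀ a, a ≠ 0 → lt 0 a

noncomputable def MonOrd.linOrd {n : ℕ} (mo : MonOrd n) :
    LinearOrder (Fin n →₀ ℕ) :=
  haveI := mo.strict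
  haveI := Classical.decRel mo.lt
  linearOrderOfSTO mo.lt

variable {n : ℕ} {k : Type*} [Field k]

/-- Leading monomial (junk value `0` for the zero polynomial). -/
noncomputable def lmon (mo : MonOrd n) (f : MvPolynomial (Fin n) k) : Fin n →₀ ℕ :=
  letI := mo.linOrd
  if h : f.support.Nonempty then f.support.max' h else 0

/-- Leading term. -/
noncomputable def lterm (mo : MonOrd n) (f : MvPolynomial (Fin n) k) :
    MvPolynomial (Fin n) k :=
  monomial (lmon mo f) (f.coeff (lmon mo f))

/-- The leading term ideal of `I`. -/
noncomputable def ltIdeal (mo : MonOrd n) (I : Ideal (MvPolynomial (Fin n) k)) :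
    Ideal (MvPolynomial (Fin n) k) :=
  Ideal.span { p | ∃ f ∈ I, f ≠ 0 ∧ p = lterm mo f }

/-- The S-polynomial of `f` and `g`. -/
noncomputable def spoly (mo : MonOrd n) (f g : MvPolynomial (Fin n) k) :
    MvPolynomial (Fin n) k :=
  (monomial ((lmon mo f ⊔ lmon mo g) - lmon mo f) (f.coeff (lmon mo f))⁻¹) * f -
  (monomial ((lmon mo f ⊔ lmon mo g) - lmon mo g) (g.coeff (lmon mo g))⁻¹) * g

/-- `p` has a standard representation with respect to the finite set `G`:
`p = ∑ h_g g` with `lm (h_g g) ≤ lm p` whenever `h_g g ≠ 0`. -/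
def stdRep (mo : MonOrd n) (G : Finset (MvPolynomial (Fin n) k))
    (p : MvPolynomial (Fin n) k) : Prop :=
  ∃ h : MvPolynomial (Fin n) k → MvPolynomial (Fin n) k,
    p = ∑ g ∈ G, h g * g ∧
    ∀ g ∈ G, h g * g ≠ 0 → ¬ mo.lt (lmon mo p) (lmon mo (h g * g))

/-- `p` has a `t`-representation with respect to `G`: `p = ∑ h_g g` with
`lm (h_g g) < t` whenever `h_g g ≠ 0`. -/
def lcmRep (mo : MonOrd n) (G : Finset (MvPolynomial (Fin n) k))
    (p : MvPolynomial (Fin n) k) (t : Fin n →₀ ℕ) : Prop :=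
  ∃ h : MvPolynomial (Fin n) k → MvPolynomial (Fin n) k,
    p = ∑ g ∈ G, h g * g ∧
    ∀ g ∈ G, h g * g ≠ 0 → mo.lt (lmon mo (h g * g)) t

theorem lmon_mem_support (mo : MonOrd n) {p : MvPolynomial (Fin n) k} (hp : p ≠ 0) :
    lmon mo p ∈ p.support := by
  let _ := mo.linOrd
  have hne : p.support.Nonempty := support_nonempty.2 hp
  rw [lmon, dif_pos hne]
  exact p.support.max'_mem hne

theorem eq_lmon_or_lt_lmon_of_mem_support (mo : MonOrd n) {p : MvPolynomial (Fin n) k}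
    {m : Fin n →₀ ℕ} (hm : m ∈ p.support) : m = lmon mo p ∨ mo.lt m (lmon mo p) := by
  let _ := mo.linOrd
  rw [lmon, dif_pos ⟨m, hm⟩]
  exact p.support.le_max' m hm

theorem lmon_lt_iff_forall_mem_support_lt (mo : MonOrd n) {p : MvPolynomial (Fin n) k}
    {t : Fin n →₀ ℕ} : (p ≠ 0 → mo.lt (lmon mo p) t) ↔ ∀ m ∈ p.support, mo.lt m t := by
  have _ := mo.strict
  refine ⟨fun h m hm => ?_, fun h hp => h _ (lmon_mem_support mo hp)⟩
  have hp : p ≠ 0 := by rintro rfl; simp at hm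
  rcases eq_lmon_or_lt_lmon_of_mem_support mo hm with rfl | hlt
  · exact h hp
  · exact _root_.trans hlt (h hp)

theorem forall_mem_support_monomial_mul_lt (mo : MonOrd n) {u : MvPolynomial (Fin n) k}
    {a t : Fin n →₀ ℕ} (c : k) (hu : ∀ m ∈ u.support, mo.lt m t) :
    ∀ m ∈ (monomial a c * u).support, mo.lt m (a + t) := by
  intro m hm
  rw [mem_support_iff, coeff_monomial_mul'] at hm
  split_ifs at hm with ham
  · have hshift := mo.compat _ _ a (hu (m - a) (mem_support_iff.2 (right_ne_zero_of_mul hm)))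
    rwa [tsub_add_cancel_of_le ham, add_comm t] at hshift
  · exact absurd rfl hm

theorem lcmRep_iff (mo : MonOrd n) (G : Finset (MvPolynomial (Fin n) k))
    (p : MvPolynomial (Fin n) k) (t : Fin n →₀ ℕ) :
    lcmRep mo G p t ↔ ∃ h : MvPolynomial (Fin n) k → MvPolynomial (Fin n) k,
      p = ∑ g ∈ G, h g * g ∧ ∀ g ∈ G, ∀ m ∈ (h g * g).support, mo.lt m t := by
  simp only [lcmRep, lmon_lt_iff_forall_mem_support_lt]

namespace lcmRep

variable {mo : MonOrd n} {G : Finset (MvPolynomial (Fin n) k)}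

theorem sub {p p' : MvPolynomial (Fin n) k} {t : Fin n →₀ ℕ}
    (hp : lcmRep mo G p t) (hp' : lcmRep mo G p' t) : lcmRep mo G (p - p') t := by
  rw [lcmRep_iff] at *
  obtain ⟨h, rfl, hlt⟩ := hp
  obtain ⟨h', rfl, hlt'⟩ := hp'
  refine ⟨fun g => h g - h' g, by simp only [sub_mul, Finset.sum_sub_distrib], ?_⟩
  intro g hg m hm
  rw [sub_mul] at hm
  rcases Finset.mem_union.1 (support_sub _ _ _ hm) with hm | hm
  · exact hlt g hg m hm
  · exact hlt' g hg m hm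

theorem monomial_mul {p : MvPolynomial (Fin n) k} {t : Fin n →₀ ℕ} (hp : lcmRep mo G p t)
    (a : Fin n →₀ ℕ) (c : k) : lcmRep mo G (monomial a c * p) (a + t) := by
  rw [lcmRep_iff] at *
  obtain ⟨h, rfl, hlt⟩ := hp
  refine ⟨fun g => monomial a c * h g, by simp only [Finset.mul_sum, mul_assoc], ?_⟩
  intro g hg
  rw [mul_assoc]
  exact forall_mem_support_monomial_mul_lt mo c (hlt g hg)

theorem monomial_tsub_mul {p : MvPolynomial (Fin n) k} {s t : Fin n →₀ ℕ}
    (hp : lcmRep mo G p s) (hst : s ≤ t) (c : k) : lcmRep mo G (monomial (t - s) c * p) t := by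
  simpa only [tsub_add_cancel_of_le hst] using hp.monomial_mul (t - s) c

end lcmRep

theorem spoly_eq_monomial_mul_spoly_sub (mo : MonOrd n) (f g q : MvPolynomial (Fin n) k)
    (hq : lmon mo q ≤ lmon mo f ⊔ lmon mo g) :
    spoly mo f g =
      monomial ((lmon mo f ⊔ lmon mo g) - (lmon mo f ⊔ lmon mo q)) 1 * spoly mo f q -
        monomial ((lmon mo f ⊔ lmon mo g) - (lmon mo g ⊔ lmon mo q)) 1 * spoly mo g q := by
  have hfq : lmon mo f ⊔ lmon mo q ≤ lmon mo f ⊔ lmon mo g := sup_le le_sup_left hq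
  have hgq : lmon mo g ⊔ lmon mo q ≤ lmon mo f ⊔ lmon mo g := sup_le le_sup_right hq
  simp only [spoly, mul_sub, ← mul_assoc, monomial_mul, one_mul]
  rw [tsub_add_tsub_cancel hfq le_sup_left, tsub_add_tsub_cancel hfq le_sup_right,
    tsub_add_tsub_cancel hgq le_sup_left, tsub_add_tsub_cancel hgq le_sup_right]
  ring

theorem stmt9_general (mo : MonOrd n) (G : Finset (MvPolynomial (Fin n) k))
    (f g q : MvPolynomial (Fin n) k)
    (hdvd : ∃ c, lmon mo f ⊔ lmon mo g = lmon mo q + c)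
    (h₁ : lcmRep mo G (spoly mo f q) (lmon mo f ⊔ lmon mo q))
    (h₂ : lcmRep mo G (spoly mo g q) (lmon mo g ⊔ lmon mo q)) :
    lcmRep mo G (spoly mo f g) (lmon mo f ⊔ lmon mo g) := by
  obtain ⟨c, hc⟩ := hdvd
  have hq : lmon mo q ≤ lmon mo f ⊔ lmon mo g := hc ▸ le_self_add
  rw [spoly_eq_monomial_mul_spoly_sub mo f g q hq]
  exact (h₁.monomial_tsub_mul (sup_le le_sup_left hq) 1).sub
    (h₂.monomial_tsub_mul (sup_le le_sup_right hq) 1)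

/-- Gebauer–Möller chain criterion: if `lm q` divides `lcm(lm f, lm g)` and both
`Spoly(f, q)` and `Spoly(g, q)` have representations w.r.t. `G ∋ f, g, q` with leading
monomials below the corresponding lcm's, then so does `Spoly(f, g)`. -/
theorem stmt9 (mo : MonOrd n) (G : Finset (MvPolynomial (Fin n) k))
    (f g q : MvPolynomial (Fin n) k) (hfG : f ∈ G) (hgG : g ∈ G) (hqG : q ∈ G)
    (hf : f ≠ 0) (hg : g ≠ 0) (hq : q ≠ 0)
    (hdvd : ∃ c, lmon mo f ⊔ lmon mo g = lmon mo q + c)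
    (h₁ : lcmRep mo G (spoly mo f q) (lmon mo f ⊔ lmon mo q))
    (h₂ : lcmRep mo G (spoly mo g q) (lmon mo g ⊔ lmon mo q)) :
    lcmRep mo G (spoly mo f g) (lmon mo f ⊔ lmon mo g) :=
  stmt9_general mo G f g q hdvd h₁ h₂
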